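/- arXiv:1504.05176 — 2 statements merged into one kernel-verified Lean document; each statement's English description precedes it below -/
import Mathlib

section
/- The mixed vertex operators are mutually inverse: Γ_{L+}(x) Γ_{R+}(-x) = Γ_{R+}(-x) Γ_{L+}(x) = Id as operators on the bosonic Fock space (and similarly for the minus versions). -/
open scoped Classical

/-- An integer partition: a nonincreasing sequence of nonnegative integers, eventually zero. -/
structure IntPartition where
  f : ℕ → ℕ
  antitone : ∀ i j : ℕ, i ≤ j → f j ≤ f i
  eventually_zero : ∃ N : ℕ, ∀ n : ℕ, N ≤ n → f n = 0

/-- `InterF f g` means `f ≻ g`, i.e. `f 0 ≥ g 0 ≥ f 1 ≥ g 1 ≥ ⋯` (0-indexed). -/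
def InterF (f g : ℕ → ℕ) : Prop := ∀ i : ℕ, g i ≤ f i ∧ f (i + 1) ≤ g i

/-- `conjF f i` is the `(i+1)`-st part of the conjugate partition: the number of `j` with `f j ≥ i+1`. -/
noncomputable def conjF (f : ℕ → ℕ) (i : ℕ) : ℕ := Set.ncard {j : ℕ | i + 1 ≤ f j}

/-- The size `|f| = Σ f i` of a partition. -/
noncomputable def sizeF (f : ℕ → ℕ) : ℕ := ∑ᶠ i : ℕ, f i

/-- The empty partition. -/
def emptyP : IntPartition := ⟨fun _ => 0, fun _ _ _ => le_rfl, ⟨0, fun _ _ => rfl⟩⟩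

/-- `Prec a μ λ` means `μ ≺ λ` in type `a`: for `a = true` (type `L`), `λ/μ` is a horizontal
strip (`λ ≻ μ`); for `a = false` (type `R`), `λ'/μ'` is a horizontal strip. -/
def Prec (a : Bool) (mu lam : IntPartition) : Prop :=
  if a then InterF lam.f mu.f else InterF (conjF lam.f) (conjF mu.f)

/-!
Rowwise, `Prec true μ ν` says that `ν / μ` is a horizontal strip (`μ_i ≤ ν_i` and
`ν_{i+1} ≤ μ_i`) and `Prec false μ ν` that it is a vertical strip (`μ_i ≤ ν_i ≤ μ_i + 1`).
Every intermediate `ν` lies between `κ` and `λ`, so the sum is `1` if `κ = λ` and empty unless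
`κ ⊆ λ`. Otherwise the sign `(-1)^{|λ| - |ν|}` (resp. `(-1)^{|ν| - |κ|}`) is `± (-1)^{|ν|}`, and
one row `i₀` of `ν` ranges over two adjacent values independently of the other rows: the first row
where `κ` and `λ` differ for a horizontal strip followed by a vertical one, the last such row in
the other order. Switching that row is a sign-reversing involution.
-/

theorem neg_one_pow_tsub {m n : ℕ} (h : n ≤ m) :
    (-1 : ℤ) ^ (m - n) = (-1) ^ m * (-1) ^ n := by
  obtain ⟨k, rfl⟩ := Nat.exists_eq_add_of_le h
  rw [Nat.add_sub_cancel_left, pow_add, mul_comm, ← mul_assoc, ← mul_pow]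
  simp

namespace IntPartition

@[ext]
theorem ext {p q : IntPartition} (h : p.f = q.f) : p = q := by
  cases p; cases q; cases h; rfl

theorem lt_conjF_iff (ν : IntPartition) (i j : ℕ) : j < conjF ν.f i ↔ i + 1 ≤ ν.f j := by
  obtain ⟨N, hN⟩ := ν.eventually_zero
  have hfin : {k | i + 1 ≤ ν.f k}.Finite :=
    (Set.finite_Iio N).subset fun k hk => by
      by_contra hkN
      have := hN k (not_lt.1 hkN)
      simp_all
  constructor
  · intro hj
    by_contra hlt
    have hsub : {k | i + 1 ≤ ν.f k} ⊆ Set.Iio j := fun k hk => by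
      by_contra hjk
      exact hlt (le_trans hk (ν.antitone j k (not_lt.1 hjk)))
    have := Set.ncard_le_ncard hsub (Set.finite_Iio j)
    rw [Set.ncard_Iio_nat] at this
    exact absurd hj (not_lt.2 this)
  · intro hj
    have hsub : Set.Iio (j + 1) ⊆ {k | i + 1 ≤ ν.f k} := fun k hk =>
      le_trans hj (ν.antitone k j (Nat.lt_succ_iff.1 hk))
    have := Set.ncard_le_ncard hsub hfin
    rw [Set.ncard_Iio_nat] at this
    exact this

theorem prec_true_iff (μ ν : IntPartition) :
    Prec true μ ν ↔ ∀ i, μ.f i ≤ ν.f i ∧ ν.f (i + 1) ≤ μ.f i :=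
  Iff.rfl

theorem prec_false_iff (μ ν : IntPartition) :
    Prec false μ ν ↔ ∀ i, μ.f i ≤ ν.f i ∧ ν.f i ≤ μ.f i + 1 := by
  simp only [Prec, InterF, Bool.false_eq_true, if_false]
  constructor
  · intro h j
    constructor
    · rcases Nat.eq_zero_or_pos (μ.f j) with h0 | h0
      · omega
      · have hμ := (μ.lt_conjF_iff (μ.f j - 1) j).2 (by omega)
        have := (ν.lt_conjF_iff (μ.f j - 1) j).1 (lt_of_lt_of_le hμ (h _).1)
        omega
    · by_contra hc
      have hν := (ν.lt_conjF_iff (μ.f j + 1) j).2 (by omega)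
      have := (μ.lt_conjF_iff (μ.f j) j).1 (lt_of_lt_of_le hν (h _).2)
      omega
  · intro h i
    constructor
    · refine le_of_forall_lt fun j hj => ?_
      rw [lt_conjF_iff] at hj ⊢
      exact le_trans hj (h j).1
    · refine le_of_forall_lt fun j hj => ?_
      rw [lt_conjF_iff] at hj ⊢
      have := (h j).2
      omega

theorem finite_setOf_le (lam : IntPartition) :
    {ν : IntPartition | ∀ i, ν.f i ≤ lam.f i}.Finite := by
  obtain ⟨N, hN⟩ := lam.eventually_zero
  refine Set.Finite.of_finite_image (f := fun ν : IntPartition => fun i : Fin N => ν.f i) ?_ ?_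
  · refine (Set.Finite.pi (t := fun _ : Fin N => Set.Iic (lam.f 0))
      fun _ => Set.finite_Iic _).subset ?_
    rintro g ⟨ν, hν, rfl⟩ i -
    exact le_trans (hν i) (lam.antitone 0 i (Nat.zero_le _))
  · intro ν hν ν' hν' hνν'
    ext i
    by_cases hi : i < N
    · exact congrFun hνν' ⟨i, hi⟩
    · have := hν i
      have := hν' i
      have := hN i (not_lt.1 hi)
      omega

theorem sizeF_eq_sum_range {f : ℕ → ℕ} {N : ℕ} (hN : ∀ n, N ≤ n → f n = 0) :
    sizeF f = ∑ i ∈ Finset.range N, f i :=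
  finsum_eq_finsetSum_of_support_subset f fun i hi => by
    by_contra hiN
    exact hi (hN i (not_lt.1 (by simpa using hiN)))

theorem sizeF_mono {μ ν : IntPartition} (h : ∀ i, μ.f i ≤ ν.f i) :
    sizeF μ.f ≤ sizeF ν.f := by
  obtain ⟨N, hN⟩ := ν.eventually_zero
  have hμN : ∀ n, N ≤ n → μ.f n = 0 := fun n hn => Nat.eq_zero_of_le_zero (hN n hn ▸ h n)
  rw [sizeF_eq_sum_range hN, sizeF_eq_sum_range hμN]
  exact Finset.sum_le_sum fun i _ => h i

theorem sizeF_update_add (ν : IntPartition) (i v : ℕ) :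
    sizeF (Function.update ν.f i v) + ν.f i = sizeF ν.f + v := by
  obtain ⟨N, hN⟩ := ν.eventually_zero
  have hM : ∀ n, max N (i + 1) ≤ n → ν.f n = 0 := fun n hn => hN n (le_of_max_le_left hn)
  have hM' : ∀ n, max N (i + 1) ≤ n → Function.update ν.f i v n = 0 := fun n hn => by
    rw [Function.update_of_ne (by omega)]
    exact hM n hn
  have hi : i ∈ Finset.range (max N (i + 1)) := Finset.mem_range.2 (by omega)
  rw [sizeF_eq_sum_range hM, sizeF_eq_sum_range hM', Finset.sum_update_of_mem hi,
    ← Finset.add_sum_erase _ _ hi, Finset.sdiff_singleton_eq_erase]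
  ring

def updateRow (ν : IntPartition) (i v : ℕ) (hlo : ν.f (i + 1) ≤ v)
    (hhi : ∀ j < i, v ≤ ν.f j) : IntPartition where
  f := Function.update ν.f i v
  antitone j k hjk := by
    rcases eq_or_ne k i with rfl | hk
    · rcases eq_or_ne j k with rfl | hj
      · rfl
      · rw [Function.update_self, Function.update_of_ne hj]
        exact hhi j (by omega)
    · rw [Function.update_of_ne hk]
      rcases eq_or_ne j i with rfl | hj
      · rw [Function.update_self]
        exact le_trans (ν.antitone (j + 1) k (by omega)) hlo
      · rw [Function.update_of_ne hj]
        exact ν.antitone j k hjk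
  eventually_zero := by
    obtain ⟨N, hN⟩ := ν.eventually_zero
    exact ⟨max N (i + 1), fun n hn => by
      rw [Function.update_of_ne (by omega)]
      exact hN n (le_of_max_le_left hn)⟩

theorem finsum_mem_neg_one_pow_sizeF_eq_zero {S : Set IntPartition} (hS : S.Finite) {i a : ℕ}
    (hrow : ∀ ν ∈ S, ν.f i = a ∨ ν.f i = a + 1)
    (hbelow : ∀ ν ∈ S, ν.f (i + 1) ≤ a) (habove : ∀ ν ∈ S, ∀ j < i, a + 1 ≤ ν.f j)
    (hswitch : ∀ ν ∈ S, ∀ μ : IntPartition, (∀ j ≠ i, μ.f j = ν.f j) →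
      (μ.f i = a ∨ μ.f i = a + 1) → μ ∈ S) :
    ∑ᶠ ν ∈ S, (-1 : ℤ) ^ sizeF ν.f = 0 := by
  rw [← hS.coe_toFinset, finsum_mem_coe_finset]
  let switch (ν : IntPartition) (hν : ν ∈ hS.toFinset) : IntPartition :=
    have hν := hS.mem_toFinset.1 hν
    ν.updateRow i (2 * a + 1 - ν.f i) (by have := hbelow ν hν; have := hrow ν hν; omega)
      fun j hj => by have := habove ν hν j hj; have := hrow ν hν; omega
  have switch_f (ν) (hν) : (switch ν hν).f = Function.update ν.f i (2 * a + 1 - ν.f i) := rfl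
  refine Finset.sum_involution switch (fun ν hν => ?_) (fun ν hν _ => ?_) (fun ν hν => ?_)
    (fun ν hν => ?_)
  · have hsize := sizeF_update_add ν i (2 * a + 1 - ν.f i)
    rw [← switch_f ν hν] at hsize
    rcases hrow ν (hS.mem_toFinset.1 hν) with h | h
    · rw [show sizeF (switch ν hν).f = sizeF ν.f + 1 by omega, pow_succ]
      ring
    · rw [show sizeF ν.f = sizeF (switch ν hν).f + 1 by omega, pow_succ]
      ring
  · intro h
    have := congrFun (congrArg IntPartition.f h) i
    rw [switch_f ν hν, Function.update_self] at this
    omega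
  · have := hrow ν (hS.mem_toFinset.1 hν)
    refine hS.mem_toFinset.2 (hswitch ν (hS.mem_toFinset.1 hν) _
      (fun j hj => by rw [switch_f ν hν, Function.update_of_ne hj]) ?_)
    rw [switch_f ν hν, Function.update_self]
    omega
  · have := hrow ν (hS.mem_toFinset.1 hν)
    ext j
    simp only [switch_f, Function.update_self]
    rcases eq_or_ne j i with rfl | hj
    · rw [Function.update_self]
      omega
    · rw [Function.update_of_ne hj, Function.update_of_ne hj]

theorem _root_.Prec.le {a : Bool} {μ ν : IntPartition} (h : Prec a μ ν) (i : ℕ) :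
    μ.f i ≤ ν.f i := by
  cases a
  · exact ((prec_false_iff μ ν).1 h i).1
  · exact (h i).1

theorem prec_self (a : Bool) (κ : IntPartition) : Prec a κ κ := by
  cases a
  · exact (prec_false_iff κ κ).2 fun i => ⟨le_rfl, by omega⟩
  · exact fun i => ⟨le_rfl, κ.antitone i (i + 1) (by omega)⟩

theorem setOf_prec_and_prec_self (a b : Bool) (κ : IntPartition) :
    {ν | Prec a κ ν ∧ Prec b ν κ} = {κ} :=
  Set.eq_singleton_iff_unique_mem.2 ⟨⟨prec_self a κ, prec_self b κ⟩, fun _ ⟨h₁, h₂⟩ =>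
    IntPartition.ext (funext fun i => le_antisymm (h₂.le i) (h₁.le i))⟩

theorem finite_setOf_prec_and_prec (a b : Bool) (κ lam : IntPartition) :
    {ν | Prec a κ ν ∧ Prec b ν lam}.Finite :=
  (finite_setOf_le lam).subset fun _ hν => hν.2.le

theorem setOf_prec_and_prec_eq_empty {a b : Bool} {κ lam : IntPartition} {i : ℕ}
    (hi : lam.f i < κ.f i) : {ν | Prec a κ ν ∧ Prec b ν lam} = ∅ :=
  Set.eq_empty_of_forall_notMem fun _ hν => (hν.1.le i).trans (hν.2.le i) |>.not_gt hi

theorem finsum_prec_true_prec_false_neg_one_pow_sizeF {κ lam : IntPartition} (hκ : κ ≠ lam) :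
    ∑ᶠ ν ∈ {ν : IntPartition | Prec true κ ν ∧ Prec false ν lam},
      (-1 : ℤ) ^ sizeF ν.f = 0 := by
  by_cases hle : ∀ i, κ.f i ≤ lam.f i
  swap
  · obtain ⟨i, hi⟩ := not_forall.1 hle
    rw [setOf_prec_and_prec_eq_empty (not_le.1 hi), finsum_mem_empty]
  have hex : ∃ i, κ.f i < lam.f i := by
    by_contra! h
    exact hκ (IntPartition.ext (funext fun i => le_antisymm (hle i) (h i)))
  obtain ⟨i₀, hi₀, hmin⟩ : ∃ i₀, κ.f i₀ < lam.f i₀ ∧ ∀ j < i₀, κ.f j = lam.f j :=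
    ⟨Nat.find hex, Nat.find_spec hex, fun j hj =>
      le_antisymm (hle j) (not_lt.1 (Nat.find_min hex hj))⟩
  have hmem (ν : IntPartition) : ν ∈ {ν | Prec true κ ν ∧ Prec false ν lam} ↔
      (∀ i, κ.f i ≤ ν.f i ∧ ν.f (i + 1) ≤ κ.f i) ∧
        ∀ i, ν.f i ≤ lam.f i ∧ lam.f i ≤ ν.f i + 1 :=
    and_congr (prec_true_iff κ ν) (prec_false_iff ν lam)
  refine finsum_mem_neg_one_pow_sizeF_eq_zero (finite_setOf_prec_and_prec _ _ κ lam)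
    (i := i₀) (a := lam.f i₀ - 1)
    (fun ν hν => ?_) (fun ν hν => ?_) (fun ν hν j hj => ?_) (fun ν hν μ hμ hμi => ?_)
  · have := ((hmem ν).1 hν).2 i₀
    omega
  · have := (((hmem ν).1 hν).1 i₀).2
    omega
  · have := (((hmem ν).1 hν).1 j).1
    have := hmin j hj
    have := lam.antitone j i₀ hj.le
    omega
  · obtain ⟨h₁, h₂⟩ := (hmem ν).1 hν
    refine (hmem μ).2 ⟨fun i => ?_, fun i => ?_⟩
    · rcases eq_or_ne i i₀ with rfl | hi
      · rw [hμ (i + 1) (by omega)]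
        exact ⟨by omega, (h₁ i).2⟩
      rw [hμ i hi]
      rcases eq_or_ne (i + 1) i₀ with rfl | hi'
      · have := hmin i (lt_add_one i)
        have := lam.antitone i (i + 1) (by omega)
        exact ⟨(h₁ i).1, by omega⟩
      rw [hμ (i + 1) hi']
      exact h₁ i
    · rcases eq_or_ne i i₀ with rfl | hi
      · omega
      rw [hμ i hi]
      exact h₂ i

theorem finsum_prec_false_prec_true_neg_one_pow_sizeF {κ lam : IntPartition} (hκ : κ ≠ lam) :
    ∑ᶠ ν ∈ {ν : IntPartition | Prec false κ ν ∧ Prec true ν lam},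
      (-1 : ℤ) ^ sizeF ν.f = 0 := by
  by_cases hle : ∀ i, κ.f i ≤ lam.f i
  swap
  · obtain ⟨i, hi⟩ := not_forall.1 hle
    rw [setOf_prec_and_prec_eq_empty (not_le.1 hi), finsum_mem_empty]
  have hex : {i | κ.f i < lam.f i}.Nonempty := by
    by_contra! h
    exact hκ (IntPartition.ext (funext fun i =>
      le_antisymm (hle i) (not_lt.1 fun hi => h.subset hi)))
  have hfin : {i | κ.f i < lam.f i}.Finite := by
    obtain ⟨N, hN⟩ := lam.eventually_zero
    refine (Set.finite_Iio N).subset fun i hi => ?_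
    by_contra hiN
    have := hN i (not_lt.1 hiN)
    simp_all
  obtain ⟨i₀, hi₀, hmax⟩ := Set.exists_max_image _ id hfin hex
  replace hi₀ : κ.f i₀ < lam.f i₀ := hi₀
  replace hmax (j) (hj : i₀ < j) : κ.f j = lam.f j :=
    le_antisymm (hle j) (not_lt.1 fun h => (hmax j h).not_gt hj)
  have hmem (ν : IntPartition) : ν ∈ {ν | Prec false κ ν ∧ Prec true ν lam} ↔
      (∀ i, κ.f i ≤ ν.f i ∧ ν.f i ≤ κ.f i + 1) ∧
        ∀ i, ν.f i ≤ lam.f i ∧ lam.f (i + 1) ≤ ν.f i :=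
    and_congr (prec_false_iff κ ν) (prec_true_iff ν lam)
  refine finsum_mem_neg_one_pow_sizeF_eq_zero (finite_setOf_prec_and_prec _ _ κ lam)
    (i := i₀) (a := κ.f i₀)
    (fun ν hν => ?_) (fun ν hν => ?_) (fun ν hν j hj => ?_) (fun ν hν μ hμ hμi => ?_)
  · have := ((hmem ν).1 hν).1 i₀
    omega
  · have := (((hmem ν).1 hν).2 (i₀ + 1)).1
    have := hmax (i₀ + 1) (lt_add_one i₀)
    have := κ.antitone i₀ (i₀ + 1) (by omega)
    omega
  · have := (((hmem ν).1 hν).2 j).2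
    have := lam.antitone (j + 1) i₀ hj
    omega
  · obtain ⟨h₁, h₂⟩ := (hmem ν).1 hν
    refine (hmem μ).2 ⟨fun i => ?_, fun i => ?_⟩
    · rcases eq_or_ne i i₀ with rfl | hi
      · omega
      rw [hμ i hi]
      exact h₁ i
    · rcases eq_or_ne i i₀ with rfl | hi
      · have := hmax (i + 1) (lt_add_one i)
        have := κ.antitone i (i + 1) (by omega)
        omega
      rw [hμ i hi]
      exact h₂ i

theorem finsum_prec_true_prec_false (κ lam : IntPartition) :
    ∑ᶠ ν ∈ {ν : IntPartition | Prec true κ ν ∧ Prec false ν lam},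
      (-1 : ℤ) ^ (sizeF lam.f - sizeF ν.f) = if κ = lam then 1 else 0 := by
  split_ifs with hκ
  · subst hκ
    simp [setOf_prec_and_prec_self]
  rw [finsum_mem_congr rfl fun ν hν => neg_one_pow_tsub (sizeF_mono hν.2.le), ← mul_finsum_mem,
    finsum_prec_true_prec_false_neg_one_pow_sizeF hκ, mul_zero]

theorem finsum_prec_false_prec_true (κ lam : IntPartition) :
    ∑ᶠ ν ∈ {ν : IntPartition | Prec false κ ν ∧ Prec true ν lam},
      (-1 : ℤ) ^ (sizeF ν.f - sizeF κ.f) = if κ = lam then 1 else 0 := by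
  split_ifs with hκ
  · subst hκ
    simp [setOf_prec_and_prec_self]
  rw [finsum_mem_congr rfl fun ν hν => neg_one_pow_tsub (sizeF_mono hν.1.le), ← finsum_mem_mul,
    finsum_prec_false_prec_true_neg_one_pow_sizeF hκ, zero_mul]

end IntPartition

/-- `Γ_{L+}(x) Γ_{R+}(-x) = Γ_{R+}(-x) Γ_{L+}(x) = Id` and similarly for the minus
versions, stated as the equality of matrix elements `⟨κ|·|λ⟩` of both sides: on each matrix
element the signed sum over intermediate partitions `ν` equals `δ_{κλ}` (all contributions
having `x`-degree `||λ|-|κ||`). -/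
theorem stmt9 (κ lam : IntPartition) :
    ((∑ᶠ ν ∈ {ν : IntPartition | Prec true κ ν ∧ Prec false ν lam},
        ((-1 : ℤ)) ^ (sizeF lam.f - sizeF ν.f)) = if κ = lam then 1 else 0) ∧
    ((∑ᶠ ν ∈ {ν : IntPartition | Prec false κ ν ∧ Prec true ν lam},
        ((-1 : ℤ)) ^ (sizeF ν.f - sizeF κ.f)) = if κ = lam then 1 else 0) ∧
    ((∑ᶠ ν ∈ {ν : IntPartition | Prec false lam ν ∧ Prec true ν κ},
        ((-1 : ℤ)) ^ (sizeF ν.f - sizeF lam.f)) = if κ = lam then 1 else 0) ∧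
    ((∑ᶠ ν ∈ {ν : IntPartition | Prec true lam ν ∧ Prec false ν κ},
        ((-1 : ℤ)) ^ (sizeF κ.f - sizeF ν.f)) = if κ = lam then 1 else 0) :=
  ⟨IntPartition.finsum_prec_true_prec_false κ lam,
    IntPartition.finsum_prec_false_prec_true κ lam,
    (IntPartition.finsum_prec_false_prec_true lam κ).trans (if_congr eq_comm rfl rfl),
    (IntPartition.finsum_prec_true_prec_false lam κ).trans (if_congr eq_comm rfl rfl)⟩
end

section
/- Vertex operators and fermionic generating functions quasi-commute: Γ_{L+}(x) ψ(z) = (1-xz)^{-1} ψ(z) Γ_{L+}(x) and Γ_{R+}(x) ψ(z) = (1+xz) ψ(z) Γ_{R+}(x), as identities of coefficient extraction: for every k ∈ ℤ+1/2, Γ_{R+}(x) ψ_k = ψ_k Γ_{R+}(x) + x ψ_{k-1} Γ_{R+}(x), and Γ_{L+}(x) ψ_k = Σ_{j≥0} x^j ψ_{k-j} Γ_{L+}(x). -/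
/-!
A Maya diagram is encoded by the decreasing sequence `k` of its black sites; with charge `c` its
partition is `λ_i = k_i - c + i + 1`. In these coordinates `μ ≺ λ` says that the two sequences
interlace, `μ' ≺ λ'` that every particle moves up by at most one site, and flipping a white site
`n` raises the charge by one and `|λ|` by `n - c`. Hence, once the charges match, all terms of both
identities carry the same weight condition, and what remains is an identity between the signs
`(-1) ^ (number of particles above the flipped site)` of inserting `n` into the sequence of `m`
and of deleting a site from the sequence of `m'`.

For vertical strips, when `n` is white the insertion is admissible exactly when one of the
deletions of `n`, `n - 1` is, at the same position; when `n` is black these two deletions are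
admissible together and carry opposite signs. For horizontal strips the admissible deletions at or
below `n` are at most two consecutive particles: a pair cancels, and a single one occurs exactly
when the insertion is admissible.
-/

open scoped Classical

/-- A Maya diagram: a two-coloring of `ℤ + 1/2` (the integer `n` encodes the position `n + 1/2`;
`true` = black marble, `false` = white marble), eventually black to the left and
eventually white to the right. -/
structure Maya where
  f : ℤ → Bool
  black_small : ∃ N : ℤ, ∀ n : ℤ, n < N → f n = true
  white_large : ∃ N : ℤ, ∀ n : ℤ, N < n → f n = false

/-- The charge of a Maya diagram:
`#{k > 0 : m k = black} - #{k < 0 : m k = white}` (positions `k = n + 1/2`). -/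
noncomputable def Maya.charge (m : Maya) : ℤ :=
  (Set.ncard {n : ℤ | 0 ≤ n ∧ m.f n = true} : ℤ) -
    (Set.ncard {n : ℤ | n < 0 ∧ m.f n = false} : ℤ)

/-- `Corresponds m lam c`: the Maya diagram `m` corresponds to the charged partition `(lam, c)`:
`c` is the charge of `m` and, enumerating the black positions `k 0 > k 1 > ⋯` of `m`
in decreasing order, `λ_{i+1} = k_{i+1} - c + (i+1) - 1/2`, which in our integer encoding of
positions (`n` encodes `n + 1/2`) reads `lam i = k i - c + i + 1`. -/
def Corresponds (m : Maya) (lam : ℕ → ℕ) (c : ℤ) : Prop :=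
  c = m.charge ∧
    ∃ k : ℕ → ℤ, StrictAnti k ∧ (∀ n : ℤ, m.f n = true ↔ ∃ i : ℕ, k i = n) ∧
      ∀ i : ℕ, (lam i : ℤ) = k i - c + i + 1

/-- The fermionic Fock space: formal linear combinations of Maya diagrams. -/
abbrev Fock := Maya →₀ ℂ

/-- Flip the marble of `m` at site `k`. -/
def Maya.flip (m : Maya) (k : ℤ) : Maya where
  f := Function.update m.f k (!(m.f k))
  black_small := by
    obtain ⟨N, hN⟩ := m.black_small
    refine ⟨min N k, fun n hn => ?_⟩
    rw [Function.update_of_ne (by omega)]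
    exact hN n (by omega)
  white_large := by
    obtain ⟨N, hN⟩ := m.white_large
    refine ⟨max N k, fun n hn => ?_⟩
    rw [Function.update_of_ne (by omega)]
    exact hN n (by omega)

/-- The number of black marbles of `m` strictly above site `k`. -/
noncomputable def nAbove (m : Maya) (k : ℤ) : ℕ := Set.ncard {j : ℤ | k < j ∧ m.f j = true}

open scoped Classical in
/-- The fermionic operator `ψ_k` (here `k : ℤ` encodes the position `k + 1/2`). -/
noncomputable def psi (k : ℤ) : Fock →ₗ[ℂ] Fock :=
  Finsupp.lsum ℂ fun m => LinearMap.toSpanSingleton ℂ Fock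
    (if m.f k = false then ((-1 : ℂ) ^ nAbove m k) • Finsupp.single (m.flip k) (1 : ℂ) else 0)

open scoped Classical in
/-- The fermionic operator `ψ*_k`. -/
noncomputable def psiStar (k : ℤ) : Fock →ₗ[ℂ] Fock :=
  Finsupp.lsum ℂ fun m => LinearMap.toSpanSingleton ℂ Fock
    (if m.f k = true then ((-1 : ℂ) ^ nAbove m k) • Finsupp.single (m.flip k) (1 : ℂ) else 0)

/-- `MayaPrec a mlow mhigh p`: the matrix element `⟨mlow|Γ_{a+}(x)|mhigh⟩` carries `x^p`, i.e.
`mlow` and `mhigh` have the same charge `c`, and their partitions `μ, λ` satisfy `μ ≺_a λ`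
(`a = true` = `L`: `λ/μ` horizontal strip; `a = false` = `R`: `λ'/μ'` horizontal strip) with
`|λ| = |μ| + p`. -/
def MayaPrec (a : Bool) (mlow mhigh : Maya) (p : ℕ) : Prop :=
  ∃ (c : ℤ) (lam mu : ℕ → ℕ), Corresponds mhigh lam c ∧ Corresponds mlow mu c ∧
    (if a then InterF lam mu else InterF (conjF lam) (conjF mu)) ∧
    sizeF lam = sizeF mu + p

section Partition

variable {f g : ℕ → ℕ}

lemma lt_conjF_iff (hf : Antitone f) {N : ℕ} (hN : f N = 0) (s j : ℕ) :
    j < conjF f s ↔ s < f j := by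
  have hex : ∃ a, f a ≤ s := ⟨N, by omega⟩
  have hset : {j : ℕ | s + 1 ≤ f j} = Set.Iio (Nat.find hex) := by
    ext j
    simp only [Set.mem_ofPred_eq, Set.mem_Iio, Nat.lt_find_iff, not_le]
    exact ⟨fun h a ha => lt_of_lt_of_le h (hf ha), fun h => h j le_rfl⟩
  rw [conjF, hset, Set.ncard_Iio_nat]
  exact (Set.ext_iff.1 hset j).symm

lemma conjF_add_le_conjF_iff (hf : Antitone f) (hg : Antitone g) {N : ℕ} (hfN : f N = 0)
    (hgN : g N = 0) (d : ℕ) : (∀ s, conjF f (s + d) ≤ conjF g s) ↔ ∀ j, f j ≤ g j + d := by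
  constructor
  · intro h j
    by_contra hj
    have h1 := (lt_conjF_iff hf hfN (g j + d) j).2 (by omega)
    have h2 := (lt_conjF_iff hg hgN (g j) j).1 (lt_of_lt_of_le h1 (h (g j)))
    omega
  · intro h s
    refine forall_lt_iff_le.1 fun j hj => ?_
    rw [lt_conjF_iff hf hfN] at hj
    rw [lt_conjF_iff hg hgN]
    have := h j
    omega

lemma interF_conjF_iff (hf : Antitone f) (hg : Antitone g) {N : ℕ} (hfN : f N = 0)
    (hgN : g N = 0) : InterF (conjF f) (conjF g) ↔ ∀ i, g i ≤ f i ∧ f i ≤ g i + 1 := by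
  have h0 := conjF_add_le_conjF_iff hg hf hgN hfN 0
  simp only [add_zero] at h0
  simp only [InterF, forall_and, h0, conjF_add_le_conjF_iff hf hg hfN hgN 1]

lemma sizeF_eq_sum_range {N : ℕ} (h : ∀ i, N ≤ i → f i = 0) :
    sizeF f = ∑ i ∈ Finset.range N, f i :=
  finsum_eq_sum_of_support_subset f fun i hi =>
    Finset.mem_coe.2 (Finset.mem_range.2 (not_le.1 fun hNi => hi (h i hNi)))

end Partition

section Sequence

variable {k K : ℕ → ℤ} {a i r : ℕ} {t : ℤ}

lemma StrictAnti.apply_add_le (hk : StrictAnti k) {i j : ℕ} (hij : i ≤ j) :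
    k j + j ≤ k i + i := by
  induction j, hij using Nat.le_induction with
  | base => exact le_rfl
  | succ j _ ih =>
    have := hk (show j < j + 1 by omega)
    push_cast
    omega

/-- The number of terms of `k` above `t`, when `k` is strictly decreasing. -/
noncomputable def insertPos (k : ℕ → ℤ) (t : ℤ) : ℕ := sInf {a | k a ≤ t}

lemma insertPos_le_iff (hk : StrictAnti k) : insertPos k t ≤ a ↔ k a ≤ t := by
  have hne : {a | k a ≤ t}.Nonempty := by
    refine ⟨(k 0 - t).toNat, ?_⟩
    have := hk.apply_add_le (Nat.zero_le (k 0 - t).toNat)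
    have := Int.self_le_toNat (k 0 - t)
    simp only [Set.mem_ofPred_eq]
    omega
  exact ⟨fun h => (hk.antitone h).trans (Nat.sInf_mem hne), fun h => Nat.sInf_le h⟩

lemma lt_insertPos_iff (hk : StrictAnti k) : a < insertPos k t ↔ t < k a := by
  rw [← not_le, ← not_le, insertPos_le_iff hk]

lemma insertPos_eq (hk : StrictAnti k) (h₁ : k r ≤ t) (h₂ : ∀ a < r, t < k a) :
    insertPos k t = r :=
  le_antisymm ((insertPos_le_iff hk).2 h₁)
    (not_lt.1 fun h => (h₂ _ h).not_ge ((insertPos_le_iff hk).1 le_rfl))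

lemma insertPos_apply (hk : StrictAnti k) (r : ℕ) : insertPos k (k r) = r :=
  insertPos_eq hk le_rfl fun _ ha => hk ha

def eraseAt (k : ℕ → ℤ) (r : ℕ) : ℕ → ℤ := fun a => if a < r then k a else k (a + 1)

def insertAt (k : ℕ → ℤ) (i : ℕ) (t : ℤ) : ℕ → ℤ :=
  fun a => if a < i then k a else if a = i then t else k (a - 1)

lemma eraseAt_of_lt (h : a < r) : eraseAt k r a = k a := if_pos h

lemma eraseAt_of_le (h : r ≤ a) : eraseAt k r a = k (a + 1) := if_neg (not_lt.2 h)

lemma insertAt_of_lt (h : a < i) : insertAt k i t a = k a := if_pos h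

lemma insertAt_self : insertAt k i t i = t := by simp [insertAt]

lemma insertAt_succ_of_le (h : i ≤ a) : insertAt k i t (a + 1) = k a := by
  simp only [insertAt, if_neg (show ¬ a + 1 < i by omega), if_neg (show a + 1 ≠ i by omega),
    Nat.add_sub_cancel]

lemma forall_eraseAt_iff {P : ℕ → ℤ → Prop} :
    (∀ a, P a (eraseAt k r a)) ↔ (∀ a < r, P a (k a)) ∧ ∀ a, r ≤ a → P a (k (a + 1)) := by
  refine ⟨fun h => ⟨fun a ha => ?_, fun a ha => ?_⟩, fun ⟨h₁, h₂⟩ a => ?_⟩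
  · simpa only [eraseAt_of_lt ha] using h a
  · simpa only [eraseAt_of_le ha] using h a
  · rcases lt_or_ge a r with ha | ha
    · rw [eraseAt_of_lt ha]; exact h₁ a ha
    · rw [eraseAt_of_le ha]; exact h₂ a ha

lemma forall_insertAt_iff {P : ℕ → ℤ → Prop} :
    (∀ a, P a (insertAt K i t a)) ↔
      (∀ a < i, P a (K a)) ∧ P i t ∧ ∀ a, i ≤ a → P (a + 1) (K a) := by
  refine ⟨fun h => ⟨fun a ha => ?_, ?_, fun a ha => ?_⟩, fun ⟨h₁, h₂, h₃⟩ a => ?_⟩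
  · simpa only [insertAt_of_lt ha] using h a
  · simpa only [insertAt_self] using h i
  · simpa only [insertAt_succ_of_le ha] using h (a + 1)
  · rcases lt_trichotomy a i with ha | rfl | ha
    · rw [insertAt_of_lt ha]; exact h₁ a ha
    · rw [insertAt_self]; exact h₂
    · obtain ⟨b, rfl⟩ : ∃ b, a = b + 1 := ⟨a - 1, by omega⟩
      rw [insertAt_succ_of_le (by omega)]; exact h₃ b (by omega)

lemma StrictAnti.eraseAt (hk : StrictAnti k) (r : ℕ) : StrictAnti (eraseAt k r) :=
  strictAnti_nat_of_succ_lt fun a => by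
    simp only [_root_.eraseAt]
    split_ifs <;> exact hk (by omega)

lemma StrictAnti.insertAt (hk : StrictAnti k) (h₁ : ∀ a < i, t < k a)
    (h₂ : ∀ a, i ≤ a → k a < t) : StrictAnti (insertAt k i t) := by
  refine strictAnti_nat_of_succ_lt fun a => ?_
  rcases lt_trichotomy (a + 1) i with ha | ha | ha
  · rw [insertAt_of_lt ha, insertAt_of_lt (by omega)]; exact hk (by omega)
  · rw [← ha, insertAt_self, insertAt_of_lt (by omega)]; exact h₁ a (by omega)
  · rw [insertAt_succ_of_le (by omega)]
    rcases eq_or_lt_of_le (Nat.lt_succ_iff.1 ha) with rfl | ha'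
    · rw [insertAt_self]; exact h₂ _ le_rfl
    · obtain ⟨b, rfl⟩ : ∃ b, a = b + 1 := ⟨a - 1, by omega⟩
      rw [insertAt_succ_of_le (by omega)]; exact hk (by omega)

lemma exists_eraseAt_eq_iff (hk : Function.Injective k) :
    (∃ a, eraseAt k r a = t) ↔ (∃ a, k a = t) ∧ t ≠ k r := by
  constructor
  · rintro ⟨a, rfl⟩
    rcases lt_or_ge a r with ha | ha
    · rw [eraseAt_of_lt ha]; exact ⟨⟨a, rfl⟩, fun h => by have := hk h; omega⟩
    · rw [eraseAt_of_le ha]; exact ⟨⟨a + 1, rfl⟩, fun h => by have := hk h; omega⟩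
  · rintro ⟨⟨a, rfl⟩, hne⟩
    rcases lt_or_gt_of_ne (fun h : a = r => hne (h ▸ rfl)) with ha | ha
    · exact ⟨a, eraseAt_of_lt ha⟩
    · exact ⟨a - 1, by rw [eraseAt_of_le (by omega), Nat.sub_add_cancel (by omega)]⟩

lemma exists_insertAt_eq_iff {s : ℤ} : (∃ a, insertAt k i t a = s) ↔ s = t ∨ ∃ a, k a = s := by
  constructor
  · rintro ⟨a, rfl⟩
    simp only [insertAt]
    split_ifs
    exacts [Or.inr ⟨a, rfl⟩, Or.inl rfl, Or.inr ⟨a - 1, rfl⟩]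
  · rintro (rfl | ⟨a, rfl⟩)
    · exact ⟨i, insertAt_self⟩
    · rcases lt_or_ge a i with ha | ha
      exacts [⟨a, insertAt_of_lt ha⟩, ⟨a + 1, insertAt_succ_of_le ha⟩]

lemma sum_range_insertAt {N : ℕ} (hi : i ≤ N) (t : ℤ) :
    ∑ a ∈ Finset.range (N + 1), insertAt k i t a = ∑ a ∈ Finset.range N, k a + t := by
  induction N, hi using Nat.le_induction with
  | base =>
    rw [Finset.sum_range_succ, insertAt_self]
    exact congrArg (· + t) (Finset.sum_congr rfl fun a ha => insertAt_of_lt (Finset.mem_range.1 ha))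
  | succ N hN ih =>
    rw [Finset.sum_range_succ, ih, insertAt_succ_of_le hN, Finset.sum_range_succ]
    ring

end Sequence

section Strip

variable {k K : ℕ → ℤ} {i r : ℕ} {n : ℤ}

/-- For the positions `x` of the particles of `μ` and `y` of those of `λ` (same charge), these say
that `λ/μ` is a horizontal, resp. vertical, strip. -/
def HorizontalStrip (x y : ℕ → ℤ) : Prop := ∀ i, x i ≤ y i ∧ y (i + 1) < x i

def VerticalStrip (x y : ℕ → ℤ) : Prop := ∀ i, x i ≤ y i ∧ y i ≤ x i + 1

def Strip : Bool → (ℕ → ℤ) → (ℕ → ℤ) → Prop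
  | true => HorizontalStrip
  | false => VerticalStrip

lemma strip_false : Strip false = VerticalStrip := rfl

lemma Strip.le {b : Bool} {x y : ℕ → ℤ} (h : Strip b x y) (i : ℕ) : x i ≤ y i := by
  cases b
  exacts [(h i).1, (h i).1]

lemma verticalStrip_eraseAt_iff :
    VerticalStrip (eraseAt k r) K ↔ (∀ a < r, k a ≤ K a ∧ K a ≤ k a + 1) ∧
      ∀ a, r ≤ a → k (a + 1) ≤ K a ∧ K a ≤ k (a + 1) + 1 :=
  forall_eraseAt_iff (P := fun a v => v ≤ K a ∧ K a ≤ v + 1)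

lemma horizontalStrip_eraseAt_iff :
    HorizontalStrip (eraseAt k r) K ↔ (∀ a < r, k a ≤ K a ∧ K (a + 1) < k a) ∧
      ∀ a, r ≤ a → k (a + 1) ≤ K a ∧ K (a + 1) < k (a + 1) :=
  forall_eraseAt_iff (P := fun a v => v ≤ K a ∧ K (a + 1) < v)

lemma verticalStrip_insertAt_iff :
    VerticalStrip k (insertAt K i n) ↔ VerticalStrip (eraseAt k i) K ∧ k i ≤ n ∧ n ≤ k i + 1 := by
  rw [VerticalStrip, forall_insertAt_iff (P := fun a v => k a ≤ v ∧ v ≤ k a + 1),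
    verticalStrip_eraseAt_iff]
  tauto

lemma horizontalStrip_insertAt_iff (hk : StrictAnti k) (hi : insertPos k n = i) :
    HorizontalStrip k (insertAt K i n) ↔ HorizontalStrip (eraseAt k i) K ∧ K i < k i := by
  have hlt : ∀ a < i, n < k a := fun a ha => (lt_insertPos_iff hk).1 (hi ▸ ha)
  have hle : k i ≤ n := (insertPos_le_iff hk).1 hi.le
  rw [horizontalStrip_eraseAt_iff]
  constructor
  · intro h
    have hKi : K i < k i := by simpa only [insertAt_succ_of_le le_rfl] using (h i).2
    refine ⟨⟨fun a ha => ⟨by simpa only [insertAt_of_lt ha] using (h a).1, ?_⟩,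
      fun a ha => ?_⟩, hKi⟩
    · rcases (show a + 1 < i ∨ a + 1 = i by omega) with ha' | ha'
      · simpa only [insertAt_of_lt ha'] using (h a).2
      · exact ha' ▸ hKi.trans (hk (by omega))
    · simpa only [insertAt_succ_of_le ha, insertAt_succ_of_le (by omega : i ≤ a + 1)]
        using h (a + 1)
  · rintro ⟨⟨h₁, h₂⟩, hKi⟩ a
    rcases lt_trichotomy a i with ha | rfl | ha
    · rw [insertAt_of_lt ha]
      refine ⟨(h₁ a ha).1, ?_⟩
      rcases (show a + 1 < i ∨ a + 1 = i by omega) with ha' | ha'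
      · rw [insertAt_of_lt ha']; exact (h₁ a ha).2
      · rw [ha', insertAt_self]; exact hlt a ha
    · rw [insertAt_self, insertAt_succ_of_le le_rfl]; exact ⟨hle, hKi⟩
    · obtain ⟨b, rfl⟩ : ∃ b, a = b + 1 := ⟨a - 1, by omega⟩
      rw [insertAt_succ_of_le (by omega), insertAt_succ_of_le (by omega)]
      exact h₂ b (by omega)

lemma insertPos_eq_of_horizontalStrip_insertAt (hk : StrictAnti k)
    (h : HorizontalStrip k (insertAt K i n)) : insertPos k n = i := by
  refine insertPos_eq hk (by simpa only [insertAt_self] using (h i).1) fun a ha => ?_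
  obtain ⟨c, rfl⟩ : ∃ c, i = c + 1 := ⟨i - 1, by omega⟩
  have := (h c).2
  rw [insertAt_self] at this
  exact this.trans_le (hk.antitone (by omega))

end Strip

section Sign

variable {k K : ℕ → ℤ} {t : ℤ}

/-- With `k`, `K` the enumerations of `m'`, `m` and `Γ` the operator whose matrix element
`⟨m'|Γ|m⟩` is `1` when the strip condition holds, `eraseSign b k K t = ⟨m'|ψ_t Γ|m⟩` and
`insertSign b k K n = ⟨m'|Γ ψ_n|m⟩`. -/
noncomputable def eraseSign (b : Bool) (k K : ℕ → ℤ) (t : ℤ) : ℂ :=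
  if ∃ r, k r = t ∧ Strip b (eraseAt k r) K then (-1) ^ insertPos k t else 0

noncomputable def insertSign (b : Bool) (k K : ℕ → ℤ) (n : ℤ) : ℂ :=
  if (∀ a, K a ≠ n) ∧ Strip b k (insertAt K (insertPos K n) n) then (-1) ^ insertPos K n else 0

lemma eraseSign_apply (hk : StrictAnti k) (b : Bool) (r : ℕ) :
    eraseSign b k K (k r) = if Strip b (eraseAt k r) K then (-1) ^ r else 0 := by
  simp only [eraseSign, insertPos_apply hk, hk.injective.eq_iff, exists_eq_left]

lemma eraseSign_of_forall_ne {b : Bool} (h : ∀ r, k r ≠ t) : eraseSign b k K t = 0 :=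
  if_neg fun ⟨r, hr, _⟩ => h r hr

lemma eraseSign_eq_ite (hk : StrictAnti k) {b : Bool} {i : ℕ}
    (huniq : ∀ r, k r = t → Strip b (eraseAt k r) K → r = i) :
    eraseSign b k K t = if k i = t ∧ Strip b (eraseAt k i) K then (-1) ^ i else 0 := by
  by_cases h : ∃ r, k r = t ∧ Strip b (eraseAt k r) K
  · obtain ⟨r, rfl, hs⟩ := h
    obtain rfl := huniq r rfl hs
    rw [eraseSign_apply hk, if_pos hs, if_pos ⟨rfl, hs⟩]
  · rw [eraseSign, if_neg h, if_neg fun h' => h ⟨i, h'⟩]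

end Sign

section VerticalCore

variable {k K : ℕ → ℤ} {b r : ℕ} {n : ℤ}

lemma insertPos_eq_of_verticalStrip_eraseAt (hk : StrictAnti k) (hK : StrictAnti K)
    (hn : ∀ a, K a ≠ n) (hr : n - 1 ≤ k r ∧ k r ≤ n) (h : VerticalStrip (eraseAt k r) K) :
    insertPos K n = r := by
  rw [verticalStrip_eraseAt_iff] at h
  refine insertPos_eq hK ?_ fun a ha => ?_
  · have := (h.2 r le_rfl).2
    have := hk (show r < r + 1 by omega)
    omega
  · have := (h.1 a ha).1
    have := hk ha
    have := hn a
    omega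

lemma verticalStrip_eraseAt_succ (hk : StrictAnti k) (hK : StrictAnti K) (hb : K b = n)
    (hr : k r = n) (h : VerticalStrip (eraseAt k r) K) :
    k (r + 1) = n - 1 ∧ VerticalStrip (eraseAt k (r + 1)) K := by
  rw [verticalStrip_eraseAt_iff] at h ⊢
  have hrb : r ≤ b := not_lt.1 fun hbr => by
    have := (h.1 b hbr).1
    have := hk hbr
    omega
  have := hK.antitone hrb
  have := h.2 r le_rfl
  have := hk (show r < r + 1 by omega)
  refine ⟨by omega, fun a ha => ?_, fun a ha => h.2 a (by omega)⟩
  rcases Nat.lt_succ_iff_lt_or_eq.1 ha with ha | rfl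
  · exact h.1 a ha
  · omega

lemma verticalStrip_eraseAt_pred (hk : StrictAnti k) (hK : StrictAnti K) (hb : K b = n)
    (hr : k r = n - 1) (h : VerticalStrip (eraseAt k r) K) :
    ∃ r', r = r' + 1 ∧ k r' = n ∧ VerticalStrip (eraseAt k r') K := by
  rw [verticalStrip_eraseAt_iff] at h
  have hKlt : ∀ a, r ≤ a → K a < n := fun a ha => by
    have := (h.2 a ha).2
    have := hk (show r < a + 1 by omega)
    omega
  obtain ⟨r', rfl⟩ : ∃ r', r = r' + 1 :=
    ⟨r - 1, by have := hKlt b; omega⟩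
  have hbr : b ≤ r' := not_lt.1 fun hrb => by have := hKlt b (by omega); omega
  have := hK.antitone hbr
  have := h.1 r' (by omega)
  have := hk (show r' < r' + 1 by omega)
  refine ⟨r', rfl, by omega, ?_⟩
  rw [verticalStrip_eraseAt_iff]
  refine ⟨fun a ha => h.1 a (by omega), fun a ha => ?_⟩
  rcases eq_or_lt_of_le ha with rfl | ha
  · omega
  · exact h.2 a (by omega)

theorem insertSign_false (hk : StrictAnti k) (hK : StrictAnti K) (n : ℤ) :
    insertSign false k K n = eraseSign false k K n + eraseSign false k K (n - 1) := by
  by_cases hn : ∀ a, K a ≠ n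
  · have huniq : ∀ t, n - 1 ≤ t → t ≤ n → ∀ r, k r = t →
        Strip false (eraseAt k r) K → r = insertPos K n :=
      fun t ht₁ ht₂ r hr h => (insertPos_eq_of_verticalStrip_eraseAt hk hK hn (by omega) h).symm
    rw [eraseSign_eq_ite hk (huniq n (by omega) le_rfl),
      eraseSign_eq_ite hk (huniq (n - 1) le_rfl (by omega))]
    simp only [insertSign, hn, ne_eq, not_false_eq_true, implies_true, true_and, strip_false,
      verticalStrip_insertAt_iff]
    by_cases hs : VerticalStrip (eraseAt k (insertPos K n)) K
    · simp only [hs, true_and, and_true]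
      split_ifs <;> first | (exfalso; omega) | ring
    · simp [hs]
  · obtain ⟨b, hb⟩ : ∃ b, K b = n := by simpa using hn
    rw [insertSign, if_neg fun h => h.1 b hb]
    by_cases h : ∃ r, k r = n ∧ VerticalStrip (eraseAt k r) K
    · obtain ⟨r, rfl, hs⟩ := h
      obtain ⟨hr, hs'⟩ := verticalStrip_eraseAt_succ hk hK hb rfl hs
      rw [← hr, eraseSign_apply hk, eraseSign_apply hk, strip_false, if_pos hs, if_pos hs',
        pow_succ]
      ring
    · have h' : ¬ ∃ r, k r = n - 1 ∧ VerticalStrip (eraseAt k r) K := fun ⟨r, hr, hs⟩ =>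
        let ⟨r', _, hr', hs'⟩ := verticalStrip_eraseAt_pred hk hK hb hr hs
        h ⟨r', hr', hs'⟩
      rw [eraseSign, eraseSign, strip_false, if_neg h, if_neg h', add_zero]

end VerticalCore

section HorizontalCore

variable {k K : ℕ → ℤ} {r r' : ℕ} {n : ℤ}

lemma horizontalStrip_eraseAt_eq_succ (h : HorizontalStrip (eraseAt k r) K)
    (h' : HorizontalStrip (eraseAt k r') K) (hlt : r < r') : r' = r + 1 := by
  rw [horizontalStrip_eraseAt_iff] at h h'
  by_contra hne
  have := (h'.1 (r + 1) (by omega)).1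
  have := (h.2 r le_rfl).2
  omega

lemma horizontalStrip_eraseAt_succ (hk : StrictAnti k) (h : HorizontalStrip (eraseAt k r) K)
    (hle : k r ≤ K r) : HorizontalStrip (eraseAt k (r + 1)) K := by
  rw [horizontalStrip_eraseAt_iff] at h ⊢
  refine ⟨fun a ha => ?_, fun a ha => h.2 a (by omega)⟩
  rcases Nat.lt_succ_iff_lt_or_eq.1 ha with ha | rfl
  · exact h.1 a ha
  · have := (h.2 a le_rfl).2
    have := hk (show a < a + 1 by omega)
    exact ⟨hle, by omega⟩

lemma le_of_horizontalStrip_eraseAt_succ (hk : StrictAnti k)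
    (h : HorizontalStrip (eraseAt k (r + 1)) K) (h' : ¬ HorizontalStrip (eraseAt k r) K) :
    k (r + 1) ≤ K (r + 1) := by
  by_contra hlt
  apply h'
  rw [horizontalStrip_eraseAt_iff] at h ⊢
  refine ⟨fun a ha => h.1 a (by omega), fun a ha => ?_⟩
  rcases eq_or_lt_of_le ha with rfl | ha
  · have := (h.1 r (by omega)).1
    have := hk (show r < r + 1 by omega)
    omega
  · exact h.2 a (by omega)

/-- Reindexing by `n - j = k r`: the indices `r` that occur are those `≥ insertPos k n`. -/
lemma finsum_eraseSign_eq_sum (hk : StrictAnti k) (b : Bool) (n : ℤ) (T : Finset ℕ)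
    (hT : ∀ r, r ∈ T ↔ insertPos k n ≤ r ∧ Strip b (eraseAt k r) K) :
    ∑ᶠ j : ℕ, eraseSign b k K (n - j) = ∑ r ∈ T, (-1 : ℂ) ^ r := by
  have hφ : ∀ r ∈ T, n - ((n - k r).toNat : ℤ) = k r := fun r hr => by
    have := (insertPos_le_iff hk).1 ((hT r).1 hr).1
    omega
  rw [finsum_eq_sum_of_support_subset _ (s := T.image fun r => (n - k r).toNat) ?_,
    Finset.sum_image fun r hr r' hr' h => hk.injective (by
      rw [← hφ r hr, ← hφ r' hr']; exact congrArg (fun j : ℕ => n - j) h)]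
  · exact Finset.sum_congr rfl fun r hr => by
      rw [hφ r hr, eraseSign_apply hk, if_pos ((hT r).1 hr).2]
  · intro j hj
    obtain ⟨r, hr, hs⟩ : ∃ r, k r = n - j ∧ Strip b (eraseAt k r) K := by
      by_contra h
      exact hj (if_neg h)
    refine Finset.mem_coe.2 (Finset.mem_image.2 ⟨r, (hT r).2 ⟨?_, hs⟩, by omega⟩)
    exact (insertPos_le_iff hk).2 (by omega)

lemma finsum_eraseSign_eq_zero (hk : StrictAnti k)
    (hρ : HorizontalStrip (eraseAt k (insertPos k n)) K → k (insertPos k n) ≤ K (insertPos k n)) :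
    ∑ᶠ j : ℕ, eraseSign true k K (n - j) = 0 := by
  by_cases hex : ∃ r, insertPos k n ≤ r ∧ HorizontalStrip (eraseAt k r) K
  · set r₀ := Nat.find hex
    obtain ⟨hle, hr₀⟩ : insertPos k n ≤ r₀ ∧ HorizontalStrip (eraseAt k r₀) K := Nat.find_spec hex
    -- then `r₀ + 1` is admissible as well, and the pair `r₀, r₀ + 1` cancels
    have hup : k r₀ ≤ K r₀ := by
      rcases eq_or_lt_of_le hle with h | h
      · rw [← h] at hr₀ ⊢
        exact hρ hr₀
      · obtain ⟨c, hc⟩ : ∃ c, r₀ = c + 1 := ⟨r₀ - 1, by omega⟩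
        rw [hc] at hr₀ ⊢
        exact le_of_horizontalStrip_eraseAt_succ hk hr₀
          fun hc' => Nat.find_min hex (show c < r₀ by omega) ⟨by omega, hc'⟩
    have hr₁ := horizontalStrip_eraseAt_succ hk hr₀ hup
    rw [finsum_eraseSign_eq_sum hk true n {r₀, r₀ + 1}, Finset.sum_pair (by omega), pow_succ]
    · ring
    intro r
    simp only [Finset.mem_insert, Finset.mem_singleton]
    constructor
    · rintro (rfl | rfl)
      exacts [⟨hle, hr₀⟩, ⟨by omega, hr₁⟩]
    · rintro ⟨hr, hs⟩
      rcases lt_trichotomy r r₀ with h | rfl | h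
      · exact absurd ⟨hr, hs⟩ (Nat.find_min hex h)
      · exact Or.inl rfl
      · exact Or.inr (horizontalStrip_eraseAt_eq_succ hr₀ hs h)
  · rw [finsum_eraseSign_eq_sum hk true n ∅ fun r => ?_, Finset.sum_empty]
    simpa using fun h₁ (h₂ : Strip true _ _) => hex ⟨r, h₁, h₂⟩

theorem insertSign_true (hk : StrictAnti k) (hK : StrictAnti K) (n : ℤ) :
    insertSign true k K n = ∑ᶠ j : ℕ, eraseSign true k K (n - j) := by
  set ρ := insertPos k n with hρ
  by_cases hsingle : HorizontalStrip (eraseAt k ρ) K ∧ K ρ < k ρ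
  · have hkρ : k ρ ≤ n := (insertPos_le_iff hk).1 le_rfl
    have hKρ : insertPos K n = ρ := insertPos_eq hK (by omega) fun a ha =>
      ((lt_insertPos_iff hk).1 ha).trans_le ((horizontalStrip_eraseAt_iff.1 hsingle.1).1 a ha).1
    have hn : ∀ a, K a ≠ n := fun a ha => by
      have := insertPos_apply hK a
      rw [ha, hKρ] at this
      subst this
      omega
    rw [insertSign, hKρ, if_pos ⟨hn, (horizontalStrip_insertAt_iff hk hρ.symm).2 hsingle⟩,
      finsum_eraseSign_eq_sum hk true n {ρ}, Finset.sum_singleton]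
    intro r
    rw [Finset.mem_singleton]
    refine ⟨fun h => h ▸ ⟨le_rfl, hsingle.1⟩, fun ⟨hle, hr⟩ => ?_⟩
    by_contra hne
    obtain rfl := horizontalStrip_eraseAt_eq_succ hsingle.1 hr (lt_of_le_of_ne hle (Ne.symm hne))
    have := ((horizontalStrip_eraseAt_iff.1 hr).1 ρ (by omega)).1
    omega
  · rw [finsum_eraseSign_eq_zero hk fun h => not_lt.1 fun hlt => hsingle ⟨h, hlt⟩, insertSign,
      if_neg]
    rintro ⟨-, hs⟩
    have hi : ρ = insertPos K n := insertPos_eq_of_horizontalStrip_insertAt hk hs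
    rw [← hi] at hs
    exact hsingle ((horizontalStrip_insertAt_iff hk hρ.symm).1 hs)

end HorizontalCore

namespace Maya

theorem ext {m₁ m₂ : Maya} (h : m₁.f = m₂.f) : m₁ = m₂ := by
  cases m₁
  cases m₂
  cases h
  rfl

lemma flip_f_self (m : Maya) (t : ℤ) : (m.flip t).f t = !m.f t := Function.update_self ..

lemma flip_f_of_ne (m : Maya) {t x : ℤ} (h : x ≠ t) : (m.flip t).f x = m.f x :=
  Function.update_of_ne h ..

lemma flip_flip (m : Maya) (t : ℤ) : (m.flip t).flip t = m :=
  ext (by simp [flip])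

end Maya

def IsEnum (m : Maya) (k : ℕ → ℤ) : Prop := StrictAnti k ∧ ∀ t, m.f t = true ↔ ∃ i, k i = t

lemma Maya.exists_isEnum (m : Maya) : ∃ k, IsEnum m k := by
  obtain ⟨N, hN⟩ := m.white_large
  obtain ⟨M, hM⟩ := m.black_small
  set p : ℕ → Prop := fun j => m.f (N - j) = true
  have hp : {j | p j}.Infinite := Set.infinite_of_forall_exists_gt fun a =>
    ⟨a + (N - M).toNat + 1, hM _ (by omega), by omega⟩
  refine ⟨fun i => N - Nat.nth p i, fun i j hij => by simpa using Nat.nth_strictMono hp hij,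
    fun t => ⟨fun ht => ?_, ?_⟩⟩
  · have htN : t ≤ N := not_lt.1 fun h => by simp [hN t h] at ht
    have hmem : (N - t).toNat ∈ Set.range (Nat.nth p) := by
      rw [Nat.range_nth_of_infinite hp]
      show m.f (N - ((N - t).toNat : ℤ)) = true
      rwa [Int.toNat_of_nonneg (by omega), sub_sub_cancel]
    obtain ⟨i, hi⟩ := hmem
    exact ⟨i, by simp only [hi]; omega⟩
  · rintro ⟨i, rfl⟩
    exact Nat.nth_mem_of_infinite hp i

noncomputable def Maya.enum (m : Maya) : ℕ → ℤ := Classical.choose m.exists_isEnum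

lemma Maya.isEnum_enum (m : Maya) : IsEnum m m.enum := Classical.choose_spec m.exists_isEnum

/-- Both the black sites above `t` and the sites of `(t, 0)` split into the black sites of `(t, 0)`
and, respectively, the black sites `≥ 0` or the white sites `< 0`. -/
lemma Maya.nAbove_eq_charge (m : Maya) {t : ℤ} (ht₀ : t < 0) (ht : ∀ x ≤ t, m.f x = true) :
    (nAbove m t : ℤ) = m.charge - t - 1 := by
  obtain ⟨N, hN⟩ := m.white_large
  have hfin : {j | t < j ∧ m.f j = true}.Finite := (Set.finite_Ioc t N).subset fun j hj =>
    ⟨hj.1, not_lt.1 fun h => by simp [hN j h] at hj⟩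
  have habove := Set.ncard_inter_add_ncard_sdiff_eq_ncard _ (Set.Iio 0) hfin
  have hIoo := Set.ncard_inter_add_ncard_sdiff_eq_ncard _ {j | m.f j = true} (Set.finite_Ioo t 0)
  have hblack : {j | t < j ∧ m.f j = true} ∩ Set.Iio 0 = Set.Ioo t 0 ∩ {j | m.f j = true} := by
    ext j
    simp only [Set.mem_inter_iff, Set.mem_ofPred_eq, Set.mem_Iio, Set.mem_Ioo]
    tauto
  have hpos : {j | t < j ∧ m.f j = true} \ Set.Iio 0 = {j | 0 ≤ j ∧ m.f j = true} := by
    ext j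
    simp only [Set.mem_sdiff, Set.mem_ofPred_eq, Set.mem_Iio, not_lt]
    grind
  have hneg : Set.Ioo t 0 \ {j | m.f j = true} = {j | j < 0 ∧ m.f j = false} := by
    ext j
    simp only [Set.mem_sdiff, Set.mem_ofPred_eq, Set.mem_Ioo, Bool.not_eq_true]
    grind
  rw [hblack, hpos] at habove
  have hcard : (Set.Ioo t 0).ncard = (0 - t - 1).toNat := by
    rw [← Finset.coe_Ioo, Set.ncard_coe_finset, Int.card_Ioo]
  rw [hneg, hcard] at hIoo
  rw [nAbove, ← habove, Maya.charge]
  omega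

namespace IsEnum

variable {m : Maya} {k : ℕ → ℤ} {n t : ℤ}

lemma nAbove_eq (h : IsEnum m k) (t : ℤ) : nAbove m t = insertPos k t := by
  have hset : {j | t < j ∧ m.f j = true} = k '' Set.Iio (insertPos k t) := by
    ext j
    simp only [Set.mem_ofPred_eq, Set.mem_image, Set.mem_Iio, h.2, lt_insertPos_iff h.1]
    constructor
    · rintro ⟨hj, i, rfl⟩
      exact ⟨i, hj, rfl⟩
    · rintro ⟨i, hi, rfl⟩
      exact ⟨hi, i, rfl⟩
  rw [nAbove, hset, Set.ncard_image_of_injective _ h.1.injective, Set.ncard_Iio_nat]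

lemma enum_eq (h : IsEnum m k) : m.enum = k := by
  funext i
  obtain ⟨a, ha⟩ := (h.2 _).1 ((m.isEnum_enum.2 _).2 ⟨i, rfl⟩)
  have hai := h.nAbove_eq (m.enum i)
  rw [m.isEnum_enum.nAbove_eq, insertPos_apply m.isEnum_enum.1, ← ha, insertPos_apply h.1] at hai
  rw [← ha, hai]

lemma white_iff (h : IsEnum m k) : m.f t = false ↔ ∀ i, k i ≠ t := by
  rw [← Bool.not_eq_true, h.2, not_exists]

lemma eraseAt (h : IsEnum m k) (r : ℕ) : IsEnum (m.flip (k r)) (eraseAt k r) := by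
  refine ⟨h.1.eraseAt r, fun t => ?_⟩
  rw [exists_eraseAt_eq_iff h.1.injective, ← h.2]
  by_cases ht : t = k r
  · subst ht
    simp [Maya.flip_f_self, (h.2 _).2 ⟨r, rfl⟩]
  · simp [Maya.flip_f_of_ne _ ht, ht]

lemma insertAt (h : IsEnum m k) (hn : m.f n = false) :
    IsEnum (m.flip n) (insertAt k (insertPos k n) n) := by
  refine ⟨h.1.insertAt (fun a ha => (lt_insertPos_iff h.1).1 ha) fun a ha => ?_, fun t => ?_⟩
  · exact lt_of_le_of_ne ((insertPos_le_iff h.1).1 ha) (h.white_iff.1 hn a)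
  · rw [exists_insertAt_eq_iff, ← h.2]
    by_cases ht : t = n
    · subst ht
      simp [Maya.flip_f_self, hn]
    · simp [Maya.flip_f_of_ne _ ht, ht]

lemma tail (h : IsEnum m k) : ∃ N, ∀ i, N ≤ i → k i = m.charge - i - 1 := by
  obtain ⟨M, hM⟩ := m.black_small
  refine ⟨(k 0 - min 0 M).toNat + 1, fun i hi => ?_⟩
  have := h.1.apply_add_le (Nat.zero_le i)
  have := Int.self_le_toNat (k 0 - min 0 M)
  have hcharge := m.nAbove_eq_charge (t := k i) (by omega) fun x hx => hM x (by omega)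
  rw [h.nAbove_eq, insertPos_apply h.1] at hcharge
  omega

lemma charge_sub_le (h : IsEnum m k) (i : ℕ) : m.charge - i - 1 ≤ k i := by
  obtain ⟨N, hN⟩ := h.tail
  have := h.1.apply_add_le (le_max_left i N)
  have := hN _ (le_max_right i N)
  push_cast at *
  omega

end IsEnum

namespace Maya

variable {m : Maya} {n t : ℤ}

lemma charge_flip_of_white (hn : m.f n = false) : (m.flip n).charge = m.charge + 1 := by
  have hK := m.isEnum_enum
  obtain ⟨N, hN⟩ := hK.tail
  obtain ⟨N', hN'⟩ := (hK.insertAt hn).tail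
  have h := hN' (max N' (N + insertPos m.enum n) + 1) (by omega)
  rw [insertAt_succ_of_le (by omega), hN _ (by omega)] at h
  push_cast at h
  omega

lemma charge_flip_of_black (ht : m.f t = true) : (m.flip t).charge + 1 = m.charge := by
  have := charge_flip_of_white (m := m.flip t) (n := t) (by simp [flip_f_self, ht])
  rwa [flip_flip, eq_comm] at this

noncomputable def partition (m : Maya) (i : ℕ) : ℕ := (m.enum i - m.charge + i + 1).toNat

noncomputable def size (m : Maya) : ℕ := sizeF m.partition

lemma partition_cast (m : Maya) (i : ℕ) : (m.partition i : ℤ) = m.enum i - m.charge + i + 1 :=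
  Int.toNat_of_nonneg (by have := m.isEnum_enum.charge_sub_le i; omega)

lemma antitone_partition (m : Maya) : Antitone m.partition :=
  antitone_nat_of_succ_le fun i => by
    have := m.isEnum_enum.1 (show i < i + 1 by omega)
    have := m.partition_cast i
    have := m.partition_cast (i + 1)
    push_cast at *
    omega

lemma partition_eq_zero {N i : ℕ} (hN : ∀ i, N ≤ i → m.enum i = m.charge - i - 1) (hi : N ≤ i) :
    m.partition i = 0 := by
  have := m.partition_cast i
  have := hN i hi
  omega

lemma size_eq_sum {N : ℕ} (hN : ∀ i, N ≤ i → m.enum i = m.charge - i - 1) :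
    (m.size : ℤ) = ∑ i ∈ Finset.range N, (m.enum i - m.charge + i + 1) := by
  rw [size, sizeF_eq_sum_range fun i hi => partition_eq_zero hN hi]
  push_cast
  exact Finset.sum_congr rfl fun i _ => m.partition_cast i

lemma size_flip_of_white (hn : m.f n = false) :
    ((m.flip n).size : ℤ) = m.size + n - m.charge := by
  have hK := m.isEnum_enum
  obtain ⟨N₀, hN₀⟩ := hK.tail
  set i := insertPos m.enum n
  have hi : i ≤ max N₀ i := le_max_right _ _
  rw [size_eq_sum (N := max N₀ i) fun a ha => hN₀ a (by omega),
    size_eq_sum (N := max N₀ i + 1) fun a ha => ?_, (hK.insertAt hn).enum_eq,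
    charge_flip_of_white hn]
  · simp only [Finset.sum_add_distrib, Finset.sum_sub_distrib, Finset.sum_const,
      Finset.card_range, nsmul_eq_mul]
    rw [sum_range_insertAt hi, Finset.sum_range_succ (fun a : ℕ => (a : ℤ))]
    push_cast
    ring
  · obtain ⟨b, rfl⟩ : ∃ b, a = b + 1 := ⟨a - 1, by omega⟩
    rw [(hK.insertAt hn).enum_eq, insertAt_succ_of_le (by omega), hN₀ b (by omega),
      charge_flip_of_white hn]
    push_cast
    ring

lemma size_flip_of_black (ht : m.f t = true) :
    ((m.flip t).size : ℤ) = m.size - t + m.charge - 1 := by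
  have := size_flip_of_white (m := m.flip t) (n := t) (by simp [flip_f_self, ht])
  rw [flip_flip] at this
  have := charge_flip_of_black ht
  omega

lemma size_le_size {m₁ m₂ : Maya} (hc : m₁.charge = m₂.charge)
    (h : ∀ i, m₁.enum i ≤ m₂.enum i) : m₁.size ≤ m₂.size := by
  obtain ⟨N₁, h₁⟩ := m₁.isEnum_enum.tail
  obtain ⟨N₂, h₂⟩ := m₂.isEnum_enum.tail
  have := size_eq_sum (N := max N₁ N₂) fun i hi => h₁ i (by omega)
  have := size_eq_sum (N := max N₁ N₂) fun i hi => h₂ i (by omega)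
  have : ∑ i ∈ Finset.range (max N₁ N₂), (m₁.enum i - m₁.charge + i + 1) ≤
      ∑ i ∈ Finset.range (max N₁ N₂), (m₂.enum i - m₂.charge + i + 1) :=
    Finset.sum_le_sum fun i _ => by have := h i; omega
  omega

end Maya

lemma corresponds_iff {m : Maya} {lam : ℕ → ℕ} {c : ℤ} :
    Corresponds m lam c ↔ c = m.charge ∧ lam = m.partition := by
  constructor
  · rintro ⟨hc, k, hk, hf, hlam⟩
    refine ⟨hc, funext fun i => ?_⟩
    have := m.partition_cast i
    rw [IsEnum.enum_eq ⟨hk, hf⟩] at this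
    have := hlam i
    omega
  · rintro ⟨rfl, rfl⟩
    exact ⟨rfl, m.enum, m.isEnum_enum.1, m.isEnum_enum.2, m.partition_cast⟩

lemma interlace_partition_iff (b : Bool) {m₁ m₂ : Maya} (hc : m₁.charge = m₂.charge) :
    (if b then InterF m₂.partition m₁.partition
      else InterF (conjF m₂.partition) (conjF m₁.partition)) ↔ Strip b m₁.enum m₂.enum := by
  cases b
  · obtain ⟨N₁, h₁⟩ := m₁.isEnum_enum.tail
    obtain ⟨N₂, h₂⟩ := m₂.isEnum_enum.tail
    rw [if_neg Bool.false_ne_true, interF_conjF_iff m₂.antitone_partition m₁.antitone_partition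
      (Maya.partition_eq_zero h₂ (le_max_right N₁ N₂))
      (Maya.partition_eq_zero h₁ (le_max_left N₁ N₂))]
    refine forall_congr' fun i => ?_
    have := m₁.partition_cast i
    have := m₂.partition_cast i
    omega
  · rw [if_pos rfl]
    refine forall_congr' fun i => ?_
    have := m₁.partition_cast i
    have := m₂.partition_cast i
    have := m₂.partition_cast (i + 1)
    push_cast at *
    omega

lemma mayaPrec_iff {b : Bool} {m₁ m₂ : Maya} {p : ℕ} :
    MayaPrec b m₁ m₂ p ↔
      m₁.charge = m₂.charge ∧ Strip b m₁.enum m₂.enum ∧ (m₂.size : ℤ) = m₁.size + p := by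
  simp only [MayaPrec, corresponds_iff]
  constructor
  · rintro ⟨c, _, _, ⟨rfl, rfl⟩, ⟨hc, rfl⟩, hs, hsize⟩
    exact ⟨hc.symm, (interlace_partition_iff b hc.symm).1 hs, by simp [Maya.size, hsize]⟩
  · rintro ⟨hc, hs, hsize⟩
    exact ⟨m₂.charge, _, _, ⟨rfl, rfl⟩, ⟨hc.symm, rfl⟩, (interlace_partition_iff b hc).2 hs,
      by exact_mod_cast hsize⟩

section MatrixElement

variable (b : Bool) (m m' : Maya)

lemma gamma_psi_coeff_eq (n : ℤ) (p : ℕ) :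
    (if m.f n = false then
        (-1 : ℂ) ^ nAbove m n * (if MayaPrec b m' (m.flip n) p then 1 else 0) else 0) =
      if m'.charge = m.charge + 1 ∧ (m.size : ℤ) + n - m.charge - m'.size = p then
        insertSign b m'.enum m.enum n else 0 := by
  have hK := m.isEnum_enum
  by_cases hn : m.f n = false
  · have hweight : ((m.size : ℤ) + n - m.charge = m'.size + p) ↔
        ((m.size : ℤ) + n - m.charge - m'.size = p) := by omega
    rw [if_pos hn, mayaPrec_iff, (hK.insertAt hn).enum_eq, Maya.charge_flip_of_white hn,
      Maya.size_flip_of_white hn, hweight, insertSign, hK.nAbove_eq]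
    simp only [hK.white_iff.1 hn, ne_eq, not_false_eq_true, implies_true, true_and]
    by_cases hs : Strip b m'.enum (insertAt m.enum (insertPos m.enum n) n) <;> simp [hs]
  · have : insertSign b m'.enum m.enum n = 0 := if_neg fun h => hn (hK.white_iff.2 h.1)
    rw [if_neg hn, this, ite_self]

lemma psi_gamma_coeff_eq (t : ℤ) (q : ℕ) :
    (if m'.f t = true then
        (-1 : ℂ) ^ nAbove m' t * (if MayaPrec b (m'.flip t) m q then 1 else 0) else 0) =
      if m'.charge = m.charge + 1 ∧ (m.size : ℤ) + t - m.charge - m'.size = q then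
        eraseSign b m'.enum m.enum t else 0 := by
  have hk := m'.isEnum_enum
  by_cases ht : m'.f t = true
  · have hcharge := Maya.charge_flip_of_black ht
    have hsize := Maya.size_flip_of_black ht
    obtain ⟨r, rfl⟩ := (hk.2 t).1 ht
    rw [if_pos ht, mayaPrec_iff, (hk.eraseAt r).enum_eq, hk.nAbove_eq, insertPos_apply hk.1,
      eraseSign_apply hk.1]
    by_cases hs : Strip b (eraseAt m'.enum r) m.enum
    · have hcond : ((m'.flip (m'.enum r)).charge = m.charge ∧
          (m.size : ℤ) = (m'.flip (m'.enum r)).size + q) ↔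
          (m'.charge = m.charge + 1 ∧ (m.size : ℤ) + m'.enum r - m.charge - m'.size = q) := by
        omega
      simp only [hs, true_and, hcond]
      split_ifs <;> simp
    · simp [hs]
  · rw [if_neg ht, eraseSign_of_forall_ne fun r hr => ht ((hk.2 t).2 ⟨r, hr⟩), ite_self]

variable {b m m'}

lemma size_le_of_eraseSign_ne_zero {t : ℤ} (hc : m'.charge = m.charge + 1)
    (h : eraseSign b m'.enum m.enum t ≠ 0) : (m'.size : ℤ) ≤ m.size + t - m.charge := by
  have hk := m'.isEnum_enum
  obtain ⟨r, rfl, hs⟩ : ∃ r, m'.enum r = t ∧ Strip b (eraseAt m'.enum r) m.enum := by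
    by_contra hne
    exact h (if_neg hne)
  have hflip := hk.eraseAt r
  have hcharge := Maya.charge_flip_of_black ((hk.2 _).2 ⟨r, rfl⟩)
  have hsize := Maya.size_flip_of_black ((hk.2 _).2 ⟨r, rfl⟩)
  have := Maya.size_le_size (m₁ := m'.flip (m'.enum r)) (m₂ := m) (by omega)
    (by rw [hflip.enum_eq]; exact hs.le)
  omega

end MatrixElement

theorem gammaR_psi_coeff_eq (n : ℤ) (m m' : Maya) (p : ℕ) :
    (if m.f n = false then
        (-1 : ℂ) ^ nAbove m n * (if MayaPrec false m' (m.flip n) p then 1 else 0)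
      else 0) =
    (if m'.f n = true then
        (-1 : ℂ) ^ nAbove m' n * (if MayaPrec false (m'.flip n) m p then 1 else 0)
      else 0) +
    (if 1 ≤ p ∧ m'.f (n - 1) = true then
        (-1 : ℂ) ^ nAbove m' (n - 1) *
          (if MayaPrec false (m'.flip (n - 1)) m (p - 1) then 1 else 0)
      else 0) := by
  set C := m'.charge = m.charge + 1 ∧ (m.size : ℤ) + n - m.charge - m'.size = p
  have hsecond : (if 1 ≤ p ∧ m'.f (n - 1) = true then
        (-1 : ℂ) ^ nAbove m' (n - 1) *
          (if MayaPrec false (m'.flip (n - 1)) m (p - 1) then 1 else 0)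
      else 0) = if C then eraseSign false m'.enum m.enum (n - 1) else 0 := by
    rcases Nat.eq_zero_or_pos p with rfl | hp
    · refine (if_neg (by omega)).trans (ite_eq_right_iff.2 fun ⟨hc, hw⟩ => ?_).symm
      by_contra h
      have := size_le_of_eraseSign_ne_zero hc h
      omega
    · have hC : (m'.charge = m.charge + 1 ∧
          (m.size : ℤ) + (n - 1) - m.charge - m'.size = ((p - 1 : ℕ) : ℤ)) ↔ C := by omega
      simp only [show 1 ≤ p from hp, true_and]
      rw [psi_gamma_coeff_eq]
      exact if_congr hC rfl rfl
  rw [gamma_psi_coeff_eq, psi_gamma_coeff_eq, hsecond]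
  split_ifs
  · exact insertSign_false m'.isEnum_enum.1 m.isEnum_enum.1 n
  · simp

theorem gammaL_psi_coeff_eq (n : ℤ) (m m' : Maya) (p : ℕ) :
    (if m.f n = false then
        (-1 : ℂ) ^ nAbove m n * (if MayaPrec true m' (m.flip n) p then 1 else 0)
      else 0) =
    ∑ j ∈ Finset.range (p + 1),
      if m'.f (n - (j : ℤ)) = true then
        (-1 : ℂ) ^ nAbove m' (n - (j : ℤ)) *
          (if MayaPrec true (m'.flip (n - (j : ℤ))) m (p - j) then 1 else 0)
      else 0 := by
  set C := m'.charge = m.charge + 1 ∧ (m.size : ℤ) + n - m.charge - m'.size = p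
  have hterm : ∀ j ∈ Finset.range (p + 1), (m'.charge = m.charge + 1 ∧
      (m.size : ℤ) + (n - j) - m.charge - m'.size = ((p - j : ℕ) : ℤ)) ↔ C := fun j hj => by
    have := Finset.mem_range.1 hj
    omega
  rw [gamma_psi_coeff_eq, Finset.sum_congr rfl fun (j : ℕ) hj =>
    (psi_gamma_coeff_eq true m m' (n - j) (p - j)).trans (if_congr (hterm j hj) rfl rfl)]
  split_ifs with hC
  · rw [insertSign_true m'.isEnum_enum.1 m.isEnum_enum.1, finsum_eq_sum_of_support_subset]
    intro j hj
    have := size_le_of_eraseSign_ne_zero hC.1 hj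
    simp only [Finset.coe_range, Set.mem_Iio]
    omega
  · rw [Finset.sum_const_zero]

/-- the quasi-commutations `Γ_{R+}(x) ψ(z) = (1+xz) ψ(z) Γ_{R+}(x)` and
`Γ_{L+}(x) ψ(z) = (1-xz)⁻¹ ψ(z) Γ_{L+}(x)`, as coefficient-extraction identities: writing
`Γ_{a+}(x) = Σ_p x^p Γ_{a+,p}` with `⟨m'|Γ_{a+,p}|m⟩ = [MayaPrec a m' m p]`, and extracting
the coefficient of each `z^k x^p`, they read `Γ_{R+}ψ_k = ψ_k Γ_{R+} + x ψ_{k-1} Γ_{R+}` and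
`Γ_{L+}ψ_k = Σ_{j ≥ 0} x^j ψ_{k-j} Γ_{L+}` (a locally finite sum).  Both sides are written as
matrix elements `⟨m'|·|m⟩` at degree `p` (the index `n : ℤ` encodes the position `n + 1/2`). -/
theorem stmt12 :
    (∀ (n : ℤ) (m m' : Maya) (p : ℕ),
      (if m.f n = false then
          (-1 : ℂ) ^ nAbove m n * (if MayaPrec false m' (m.flip n) p then 1 else 0)
        else 0) =
      (if m'.f n = true then
          (-1 : ℂ) ^ nAbove m' n * (if MayaPrec false (m'.flip n) m p then 1 else 0)
        else 0) +
      (if 1 ≤ p ∧ m'.f (n - 1) = true then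
          (-1 : ℂ) ^ nAbove m' (n - 1) * (if MayaPrec false (m'.flip (n - 1)) m (p - 1) then 1 else 0)
        else 0)) ∧
    (∀ (n : ℤ) (m m' : Maya) (p : ℕ),
      (if m.f n = false then
          (-1 : ℂ) ^ nAbove m n * (if MayaPrec true m' (m.flip n) p then 1 else 0)
        else 0) =
      ∑ j ∈ Finset.range (p + 1),
        if m'.f (n - (j : ℤ)) = true then
          (-1 : ℂ) ^ nAbove m' (n - (j : ℤ)) *
            (if MayaPrec true (m'.flip (n - (j : ℤ))) m (p - j) then 1 else 0)
        else 0) :=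
  ⟨gammaR_psi_coeff_eq, gammaL_psi_coeff_eq⟩
end
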